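/- Let T_n(q) = Σ_{σ ∈ 𝒬̂_{n+1}} q^{cyc(σ)}, a polynomial in q with integer coefficients. Then for every integer n ≥ 1, T_{n+1}(q) = (n+1+q)·T_n(q) − n·T_{n−1}(q), with T_0(q) = q and T_1(q) = q + q². -/

import Mathlib

open Finset Polynomial

/-- `fixp(σ)`: the number of fixed points of `σ`. -/
def fixp {n : ℕ} (σ : Equiv.Perm (Fin n)) : ℕ :=
  (Finset.univ.filter fun i => σ i = i).card

/-- `cyc(σ)`: the number of cycles of `σ`, fixed points counted. -/
def cyc {n : ℕ} (σ : Equiv.Perm (Fin n)) : ℕ :=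
  σ.cycleType.card + fixp σ

/-- `𝒬̂_{m+1}`: permutations `σ` of `{1, …, m+1}` such that every element `x` other
than the largest element in the cycle of `σ` containing the largest element
satisfies `σ(x) > x`. -/
noncomputable def Qhat (m : ℕ) : Finset (Equiv.Perm (Fin (m + 1))) :=
  Finset.univ.filter fun σ =>
    ∀ x, σ.SameCycle x (Fin.last m) → x ≠ Fin.last m → x < σ x

/-- `T_n(q) = Σ_{σ ∈ 𝒬̂_{n+1}} q^{cyc σ}`. -/
noncomputable def Tpoly (n : ℕ) : Polynomial ℤ :=
  ∑ σ ∈ Qhat n, X ^ cyc σ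

/-!
On the cycle `C` through `n + 1`, a permutation `σ ∈ 𝒬̂_{n+1}` has no choice: the orbit
`σ (n+1), σ² (n+1), …` climbs through `C` in increasing order, so `σ` is the increasing cycle on
`C`, while off `C` it is an arbitrary permutation `τ` of the complement, and `cyc σ = cyc τ + 1`.
As `∑_{τ ∈ S_m} q^{cyc τ}` is the rising factorial `q^(m) = q (q+1) ⋯ (q+m-1)`, this gives
`T_n = q · A_n` with `A_n = ∑_j C(n,j) q^(j)`. Pascal's rule and `q^(j+1) = (q+j) q^(j)` give
`A_{n+1} = A_n + B_n` and `B_{n+1} = q A_{n+1} + (n+1) B_n` for `B_n = ∑_j C(n,j) q^(j+1)`, and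
eliminating `B` leaves the recurrence.
-/

open Equiv Equiv.Perm

section NumCycles

variable {α β : Type*} [Fintype α] [DecidableEq α] [Fintype β] [DecidableEq β]

def numCycles (σ : Perm α) : ℕ :=
  Multiset.card σ.partition.parts

lemma numCycles_eq_card_cycleType_add (σ : Perm α) :
    numCycles σ = Multiset.card σ.cycleType + (Fintype.card α - #σ.support) := by
  simp [numCycles, parts_partition]

lemma cyc_eq_numCycles {m : ℕ} (σ : Perm (Fin m)) : cyc σ = numCycles σ := by
  have hfix : fixp σ + #σ.support = m := by
    simpa [fixp, Equiv.Perm.support] using card_filter_add_card_filter_not (s := univ)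
      (fun i => σ i = i)
  rw [cyc, numCycles_eq_card_cycleType_add, Fintype.card_fin]
  omega

lemma numCycles_extendDomain {p : β → Prop} [DecidablePred p] (f : α ≃ Subtype p)
    (σ : Perm α) :
    numCycles (σ.extendDomain f) = numCycles σ + (Fintype.card β - Fintype.card α) := by
  have hαβ : Fintype.card α ≤ Fintype.card β :=
    Fintype.card_le_of_embedding (f.toEmbedding.trans (Function.Embedding.subtype p))
  have hσ : #σ.support ≤ Fintype.card α := card_le_univ _
  rw [numCycles_eq_card_cycleType_add, numCycles_eq_card_cycleType_add, cycleType_extendDomain,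
    card_support_extend_domain]
  omega

lemma numCycles_permCongr (e : α ≃ β) (σ : Perm α) :
    numCycles (e.permCongr σ) = numCycles σ := by
  have h : e.permCongr σ =
      σ.extendDomain (e.trans (Equiv.subtypeUnivEquiv fun _ => trivial).symm) := by
    ext x
    rw [extendDomain_apply_subtype _ _ trivial]
    simp [permCongr_apply]
  rw [h, numCycles_extendDomain, Fintype.card_congr e, Nat.sub_self, add_zero]

lemma numCycles_optionCongr (σ : Perm α) : numCycles σ.optionCongr = numCycles σ + 1 := by
  have h : σ.optionCongr = σ.extendDomain (optionIsSomeEquiv α).symm := by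
    ext (_ | x)
    · rw [extendDomain_apply_not_subtype _ _ (by simp)]
      rfl
    · rw [extendDomain_apply_subtype _ _ (by simp)]
      rfl
  rw [h, numCycles_extendDomain, Fintype.card_option]
  omega

lemma numCycles_mul_of_isCycle {c d : Perm α} (hc : c.IsCycle) (hcd : c.Disjoint d) :
    numCycles (c * d) + #c.support = numCycles d + 1 := by
  have hsupp : #(c * d).support = #c.support + #d.support := by
    rw [hcd.support_mul, card_union_of_disjoint (disjoint_iff_disjoint_support.mp hcd)]
  have hle : #(c * d).support ≤ Fintype.card α := card_le_univ _
  rw [numCycles_eq_card_cycleType_add, numCycles_eq_card_cycleType_add, hcd.cycleType_mul,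
    hc.cycleType, Multiset.card_add]
  simp only [Multiset.card_singleton]
  omega

lemma numCycles_swap_mul {τ : Perm α} {x : α} (hx : τ x ≠ x) :
    numCycles (swap x (τ x) * τ) = numCycles τ + 1 := by
  set c := τ.cycleOf x
  have hc : c.IsCycle := isCycle_cycleOf τ hx
  have hcτ : c ∈ τ.cycleFactorsFinset :=
    cycleOf_mem_cycleFactorsFinset_iff.mpr (mem_support.mpr hx)
  set d := τ * c⁻¹
  have hcd : c.Disjoint d := (disjoint_mul_inv_of_mem_cycleFactorsFinset hcτ).symm
  have hτ : τ = c * d := by rw [hcd.commute.eq, inv_mul_cancel_right]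
  have hτx : τ x = c x := (cycleOf_apply_self τ x).symm
  have hcx : c x ≠ x := hτx ▸ hx
  have hsplit := numCycles_mul_of_isCycle hc hcd
  rw [hτx, hτ, ← mul_assoc]
  by_cases hccx : c (c x) = x
  · have hc2 : c = swap x (c x) := hc.eq_swap_of_apply_apply_eq_self hcx hccx
    have hcard : #c.support = 2 := by
      rw [show #c.support = #(swap x (c x)).support by rw [← hc2], card_support_swap hcx.symm]
    have hc1 : swap x (c x) * c = 1 := by
      calc swap x (c x) * c = swap x (c x) * swap x (c x) := congrArg _ hc2
        _ = 1 := swap_mul_self _ _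
    rw [hc1, one_mul]
    omega
  · have hsupp : (swap x (c x) * c).support = c.support \ {x} := support_swap_mul_eq c x hccx
    have hsplit' := numCycles_mul_of_isCycle (hc.swap_mul hcx hccx)
      (hcd.mono (by rw [hsupp]; exact sdiff_subset) le_rfl)
    rw [hsupp, card_sdiff_of_subset (by simpa using hcx), card_singleton] at hsplit'
    have := hc.two_le_card_support
    omega

end NumCycles

section CyclePolynomial

variable (R : Type*) [CommSemiring R] {α β : Type*} [Fintype α] [DecidableEq α]
  [Fintype β] [DecidableEq β]

lemma sum_perm_X_pow_numCycles_congr (e : α ≃ β) :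
    ∑ σ : Perm α, (X : R[X]) ^ numCycles σ = ∑ σ : Perm β, (X : R[X]) ^ numCycles σ :=
  Fintype.sum_equiv e.permCongr _ _ fun σ => by rw [numCycles_permCongr]

lemma sum_perm_option_X_pow_numCycles :
    ∑ σ : Perm (Option α), (X : R[X]) ^ numCycles σ
      = (X + (Fintype.card α : R[X])) * ∑ σ : Perm α, (X : R[X]) ^ numCycles σ := by
  have hnone (τ : Perm α) : numCycles (decomposeOption.symm (none, τ)) = numCycles τ + 1 := by
    simp [decomposeOption, ← Perm.one_def, numCycles_optionCongr]
  have hsome (a : α) (τ : Perm α) :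
      numCycles (decomposeOption.symm (some a, τ)) = numCycles τ := by
    set σ := decomposeOption.symm (some a, τ)
    have hσ : swap none (σ none) * σ = τ.optionCongr := by
      simp [σ, ← mul_assoc]
    have := numCycles_swap_mul (τ := σ) (x := none) (by simp [σ])
    rw [hσ, numCycles_optionCongr] at this
    omega
  rw [← decomposeOption.symm.sum_comp, Fintype.sum_prod_type, Fintype.sum_option]
  simp only [hnone, hsome, pow_succ, ← Finset.sum_mul, sum_const, card_univ, nsmul_eq_mul]
  ring

lemma sum_perm_fin_X_pow_numCycles (m : ℕ) :
    ∑ σ : Perm (Fin m), (X : R[X]) ^ numCycles σ = ascPochhammer R m := by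
  induction m with
  | zero => simp [numCycles_eq_card_cycleType_add]
  | succ m ih =>
    rw [sum_perm_X_pow_numCycles_congr R (finSuccEquiv m), sum_perm_option_X_pow_numCycles, ih,
      ascPochhammer_succ_right, Fintype.card_fin, mul_comm]

theorem sum_perm_X_pow_numCycles :
    ∑ σ : Perm α, (X : R[X]) ^ numCycles σ = ascPochhammer R (Fintype.card α) := by
  rw [sum_perm_X_pow_numCycles_congr R (Fintype.equivFin α), sum_perm_fin_X_pow_numCycles]

end CyclePolynomial

lemma Equiv.Perm.IsCycleOn.congr {α : Type*} {s : Finset α} {f g : Perm α}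
    (hf : f.IsCycleOn s) (h : Set.EqOn f g s) : g.IsCycleOn s := by
  have hpow : ∀ k, ∀ x ∈ s, (g ^ k) x = (f ^ k) x := by
    intro k
    induction k with
    | zero => simp
    | succ k ih =>
      intro x hx
      rw [pow_succ', mul_apply, ih x hx, pow_succ', mul_apply]
      exact (h ((hf.1.perm_pow k).mapsTo hx)).symm
  refine ⟨hf.1.congr h, fun x hx y hy => ?_⟩
  obtain ⟨k, -, hk⟩ := hf.exists_pow_eq hx hy
  exact ⟨k, by rw [zpow_natCast, hpow k x hx, hk]⟩

section IncreasingCycle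

variable {α : Type*} [LinearOrder α] {s : Finset α} {a x : α} {f : Perm α}

def incCycle (s : Finset α) : Perm α :=
  s.sort.formPerm

lemma isCycleOn_incCycle (s : Finset α) : (incCycle s).IsCycleOn s := by
  simpa [incCycle] using (s.sort_nodup (· ≤ ·)).isCycleOn_formPerm

lemma incCycle_apply_of_notMem (hx : x ∉ s) : incCycle s x = x :=
  List.formPerm_apply_of_notMem (by simpa using hx)

lemma incCycle_getElem_sort (i : ℕ) (hi : i < s.sort.length) :
    incCycle s s.sort[i] = s.sort[(i + 1) % #s]'(by
      rw [length_sort] at hi ⊢; exact Nat.mod_lt _ (by omega)) := by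
  simp [incCycle, List.formPerm_apply_getElem _ (s.sort_nodup (· ≤ ·))]

lemma lt_incCycle_apply (ha : IsGreatest (s : Set α) a) (hx : x ∈ s) (hxa : x ≠ a) :
    x < incCycle s x := by
  obtain ⟨i, hi, rfl⟩ := List.getElem_of_mem ((mem_sort (· ≤ ·)).mpr hx)
  obtain ⟨j, hj, hja⟩ := List.getElem_of_mem ((mem_sort (· ≤ ·)).mpr ha.1)
  have hij : i < j :=
    (sortedLT_sort s).getElem_lt_getElem_iff.mp (hja ▸ lt_of_le_of_ne (ha.2 hx) hxa)
  have hlt : i + 1 < #s := by rw [length_sort] at hj; omega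
  simp only [incCycle_getElem_sort, Nat.mod_eq_of_lt hlt]
  exact (sortedLT_sort s).getElem_lt_getElem_iff.mpr (Nat.lt_succ_self i)

/- `f` moves every element of `s` but the maximum `a` upwards, so the orbit
`f a, f² a, …, f^#s a = a` is increasing and hence lists `s` in order. -/
lemma Equiv.Perm.IsCycleOn.pow_succ_apply_eq_getElem_sort (ha : IsGreatest (s : Set α) a)
    (hf : f.IsCycleOn s) (hinc : ∀ x ∈ s, x ≠ a → x < f x) (i : ℕ) (hi : i < #s) :
    (f ^ (i + 1)) a = s.sort[i]'(by simpa using hi) := by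
  have hstep : ∀ k < #s - 1, (f ^ (k + 1)) a < (f ^ (k + 1 + 1)) a := by
    intro k hk
    have hne : (f ^ (k + 1)) a ≠ a := fun h =>
      absurd (Nat.le_of_dvd (by omega) ((hf.pow_apply_eq ha.1).mp h)) (by omega)
    rw [pow_succ' f (k + 1), mul_apply]
    exact hinc _ ((hf.1.perm_pow _).mapsTo ha.1) hne
  have hmono : StrictMono fun k : Fin #s => (f ^ ((k : ℕ) + 1)) a := fun k l hkl =>
    strictMonoOn_Iic_of_lt_succ (n := #s - 1) (fun m hm => by simpa using hstep m hm)
      (Set.mem_Iic.mpr (by omega)) (Set.mem_Iic.mpr (by omega)) hkl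
  exact congrFun (orderEmbOfFin_unique rfl (fun k => (hf.1.perm_pow _).mapsTo ha.1) hmono) ⟨i, hi⟩

lemma Equiv.Perm.IsCycleOn.eqOn_incCycle (ha : IsGreatest (s : Set α) a) (hf : f.IsCycleOn s)
    (hinc : ∀ x ∈ s, x ≠ a → x < f x) : Set.EqOn f (incCycle s) s := by
  intro x hx
  obtain ⟨i, hi, rfl⟩ := List.getElem_of_mem ((mem_sort (· ≤ ·)).mpr hx)
  have hs : i < #s := by simpa using hi
  have hmod : (i + 1) % #s < #s := Nat.mod_lt _ (by omega)
  rw [incCycle_getElem_sort, ← hf.pow_succ_apply_eq_getElem_sort ha hinc i hs,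
    ← hf.pow_succ_apply_eq_getElem_sort ha hinc _ hmod, ← mul_apply, ← pow_succ',
    hf.pow_apply_eq_pow_apply ha.1]
  exact (Nat.mod_modEq _ _).symm.add_right 1

lemma numCycles_incCycle_mul [Fintype α] (hs : s.Nonempty) {d : Perm α}
    (hd : ∀ x ∈ s, d x = x) : numCycles (incCycle s * d) + #s = numCycles d + 1 := by
  obtain ⟨b, rfl⟩ | hnt := hs.exists_eq_singleton_or_nontrivial
  · simp [incCycle]
  have hlen : 2 ≤ (s.sort (· ≤ ·)).length := by
    rw [length_sort]; exact one_lt_card_iff_nontrivial.mpr hnt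
  have hsupp : (incCycle s).support = s := by
    rw [incCycle, List.support_formPerm_of_nodup _ (s.sort_nodup _)
      (fun x h => by simp [h] at hlen), sort_toFinset]
  have hdisj : (incCycle s).Disjoint d := by
    rw [disjoint_iff_disjoint_support, hsupp]
    exact Finset.disjoint_left.mpr fun x hx => notMem_support.mpr (hd x hx)
  have hc : (incCycle s).IsCycle := List.isCycle_formPerm (s.sort_nodup _) hlen
  simpa [hsupp] using numCycles_mul_of_isCycle hc hdisj

variable [Fintype α] {τ : Perm {x // x ∈ sᶜ}}

def incCycleWith (s : Finset α) (τ : Perm {x // x ∈ sᶜ}) : Perm α :=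
  incCycle s * ofSubtype τ

lemma eqOn_incCycleWith : Set.EqOn (incCycleWith s τ) (incCycle s) s := fun x hx => by
  rw [incCycleWith, mul_apply, ofSubtype_apply_of_not_mem τ (by simpa using hx)]

lemma isCycleOn_incCycleWith : (incCycleWith s τ).IsCycleOn s :=
  (isCycleOn_incCycle s).congr eqOn_incCycleWith.symm

lemma incCycleWith_injective (s : Finset α) : Function.Injective (incCycleWith s) :=
  fun _ _ h => ofSubtype_injective (mul_left_cancel h)

lemma numCycles_incCycleWith (hs : s.Nonempty) :
    numCycles (incCycleWith s τ) = numCycles τ + 1 := by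
  have hfix : ∀ x ∈ s, ofSubtype τ x = x := fun x hx =>
    ofSubtype_apply_of_not_mem τ (by simpa using hx)
  have hsub : numCycles (ofSubtype τ) = numCycles τ + #s := by
    have h := numCycles_extendDomain (Equiv.refl {x // x ∈ sᶜ}) τ
    rw [Fintype.card_coe, card_compl] at h
    have : #s ≤ Fintype.card α := card_le_univ s
    exact h.trans (by omega)
  have := numCycles_incCycle_mul hs hfix
  rw [incCycleWith]
  omega

lemma incCycleWith_subtypePerm {f : Perm α} (hf : ∀ x, f x ∈ sᶜ ↔ x ∈ sᶜ)
    (hfs : Set.EqOn f (incCycle s) s) : incCycleWith s (f.subtypePerm hf) = f := by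
  ext x
  by_cases hx : x ∈ s
  · rw [eqOn_incCycleWith hx, hfs hx]
  · have hx' : x ∈ sᶜ := mem_compl.mpr hx
    rw [incCycleWith, mul_apply, ofSubtype_apply_of_mem _ hx', subtypePerm_apply,
      incCycle_apply_of_notMem (mem_compl.mp ((hf x).mpr hx'))]

end IncreasingCycle

section BinomialSum

variable (R : Type*) [CommRing R]

noncomputable def sumChooseAscPochhammer (n : ℕ) : R[X] :=
  ∑ m ∈ range (n + 1), n.choose m • ascPochhammer R m

lemma sumChooseAscPochhammer_succ (n : ℕ) :
    sumChooseAscPochhammer R (n + 1) = sumChooseAscPochhammer R n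
      + ∑ m ∈ range (n + 1), n.choose m • ascPochhammer R (m + 1) :=
  sum_choose_succ_nsmul (fun m _ => ascPochhammer R m) n

lemma sum_choose_nsmul_ascPochhammer_succ_succ (n : ℕ) :
    ∑ m ∈ range (n + 2), (n + 1).choose m • ascPochhammer R (m + 1)
      = X * sumChooseAscPochhammer R (n + 1)
        + (n + 1 : R[X]) * ∑ m ∈ range (n + 1), n.choose m • ascPochhammer R (m + 1) := by
  have hsplit : ∀ m, (n + 1).choose m • ascPochhammer R (m + 1)
      = X * ((n + 1).choose m • ascPochhammer R m)
        + ((n + 1).choose m * m : ℕ) • ascPochhammer R m := fun m => by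
    simp only [ascPochhammer_succ_right, nsmul_eq_mul]
    push_cast
    ring
  have hshift : ∑ m ∈ range (n + 2), ((n + 1).choose m * m : ℕ) • ascPochhammer R m
      = (n + 1 : R[X]) * ∑ m ∈ range (n + 1), n.choose m • ascPochhammer R (m + 1) := by
    rw [sum_range_succ', mul_sum]
    refine (add_eq_left.mpr (by simp)).trans (sum_congr rfl fun m _ => ?_)
    rw [← Nat.add_one_mul_choose_eq, nsmul_eq_mul, nsmul_eq_mul]
    push_cast
    ring
  rw [sum_congr rfl fun m _ => hsplit m, sum_add_distrib, ← mul_sum, hshift,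
    sumChooseAscPochhammer]

theorem sumChooseAscPochhammer_add_two (n : ℕ) :
    sumChooseAscPochhammer R (n + 2)
      = ((n : R[X]) + 2 + X) * sumChooseAscPochhammer R (n + 1)
        - ((n : R[X]) + 1) * sumChooseAscPochhammer R n := by
  have h₀ := sumChooseAscPochhammer_succ R n
  rw [sumChooseAscPochhammer_succ R (n + 1), sum_choose_nsmul_ascPochhammer_succ_succ,
    ← sub_eq_of_eq_add' h₀]
  ring

end BinomialSum

section Qhat

variable {n : ℕ} {σ : Perm (Fin (n + 1))} {C : Finset (Fin (n + 1))}

noncomputable def cycSet (σ : Perm (Fin (n + 1))) : Finset (Fin (n + 1)) :=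
  {x | σ.SameCycle x (Fin.last n)}

lemma mem_cycSet {x : Fin (n + 1)} : x ∈ cycSet σ ↔ σ.SameCycle x (Fin.last n) := by
  simp [cycSet]

lemma isCycleOn_cycSet (σ : Perm (Fin (n + 1))) : σ.IsCycleOn (cycSet σ) :=
  ⟨σ.bijOn fun x => by simp [mem_cycSet, sameCycle_apply_left],
    fun _ hx _ hy => (mem_cycSet.mp hx).trans (mem_cycSet.mp hy).symm⟩

lemma cycSet_eq_of_isCycleOn (hσ : σ.IsCycleOn C) (hL : Fin.last n ∈ C) : cycSet σ = C := by
  ext x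
  refine ⟨fun hx => ?_, fun hx => mem_cycSet.mpr (hσ.2 hx hL)⟩
  obtain ⟨k, rfl⟩ := (mem_cycSet.mp hx).symm
  exact (hσ.1.perm_zpow k).mapsTo hL

lemma mem_Qhat_and_cycSet_eq_iff (hL : Fin.last n ∈ C) :
    σ ∈ Qhat n ∧ cycSet σ = C ↔ σ.IsCycleOn C ∧ ∀ x ∈ C, x ≠ Fin.last n → x < σ x := by
  have hQ : σ ∈ Qhat n ↔ ∀ x ∈ cycSet σ, x ≠ Fin.last n → x < σ x := by
    simp [Qhat, mem_cycSet]
  constructor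
  · rintro ⟨hσ, rfl⟩
    exact ⟨isCycleOn_cycSet σ, hQ.mp hσ⟩
  · rintro ⟨hσ, hinc⟩
    have hC := cycSet_eq_of_isCycleOn hσ hL
    exact ⟨hQ.mpr (hC ▸ hinc), hC⟩

lemma sum_Qhat_filter_cycSet_eq (hL : Fin.last n ∈ C) :
    ∑ σ ∈ Qhat n with cycSet σ = C, (X : ℤ[X]) ^ cyc σ = X * ascPochhammer ℤ #Cᶜ := by
  have hLmax : IsGreatest (C : Set (Fin (n + 1))) (Fin.last n) := ⟨hL, fun x _ => Fin.le_last x⟩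
  rw [← Fintype.card_coe, ← sum_perm_X_pow_numCycles, mul_sum]
  symm
  refine sum_nbij (incCycleWith C) (fun τ _ => ?_) (incCycleWith_injective C).injOn
    (fun σ hσ => ?_) (fun τ _ => ?_)
  · rw [mem_filter, mem_Qhat_and_cycSet_eq_iff hL]
    refine ⟨isCycleOn_incCycleWith, fun x hx hxL => ?_⟩
    rw [eqOn_incCycleWith hx]
    exact lt_incCycle_apply hLmax hx hxL
  · rw [mem_coe, mem_filter, mem_Qhat_and_cycSet_eq_iff hL] at hσ
    have hσC : ∀ x, σ x ∈ Cᶜ ↔ x ∈ Cᶜ := fun x => by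
      simpa using hσ.1.apply_mem_iff.not
    exact ⟨σ.subtypePerm hσC, mem_coe.mpr (mem_univ _),
      incCycleWith_subtypePerm hσC (hσ.1.eqOn_incCycle hLmax hσ.2)⟩
  · rw [cyc_eq_numCycles, numCycles_incCycleWith ⟨_, hL⟩, pow_succ']

theorem Tpoly_eq_X_mul (n : ℕ) : Tpoly n = X * sumChooseAscPochhammer ℤ n := by
  have hmaps : ∀ σ ∈ Qhat n, (cycSet σ)ᶜ ∈ (univ.erase (Fin.last n)).powerset := fun σ _ => by
    simp [subset_erase, mem_cycSet, SameCycle.refl]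
  rw [Tpoly, ← sum_fiberwise_of_maps_to hmaps]
  have hfiber : ∀ E ∈ (univ.erase (Fin.last n)).powerset,
      ∑ σ ∈ Qhat n with (cycSet σ)ᶜ = E, (X : ℤ[X]) ^ cyc σ = X * ascPochhammer ℤ #E := by
    intro E hE
    have hL : Fin.last n ∈ Eᶜ := by simpa [subset_erase] using hE
    simp_rw [compl_eq_comm, eq_comm (a := Eᶜ)]
    rw [sum_Qhat_filter_cycSet_eq hL, compl_compl]
  rw [sum_congr rfl hfiber, ← mul_sum, sum_powerset_apply_card, sumChooseAscPochhammer,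
    card_erase_of_mem (mem_univ _), card_univ, Fintype.card_fin, Nat.add_sub_cancel]

end Qhat

theorem Tpoly_recurrence :
    Tpoly 0 = X ∧ Tpoly 1 = X + X ^ 2 ∧
      ∀ n : ℕ, 1 ≤ n →
        Tpoly (n + 1) = ((n : Polynomial ℤ) + 1 + X) * Tpoly n
          - (n : Polynomial ℤ) * Tpoly (n - 1) := by
  simp only [Tpoly_eq_X_mul]
  refine ⟨by simp [sumChooseAscPochhammer], ?_, fun n hn => ?_⟩
  · simp only [sumChooseAscPochhammer, sum_range_succ, range_one, sum_singleton,
      Nat.choose_zero_right, Nat.choose_self, one_smul, ascPochhammer_zero, ascPochhammer_one]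
    ring
  · obtain ⟨m, rfl⟩ := Nat.exists_eq_add_of_le' hn
    rw [sumChooseAscPochhammer_add_two, Nat.add_sub_cancel]
    push_cast
    ring
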